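/- arXiv:2504.12827 — 4 statements merged into one kernel-verified Lean document; each statement's English description precedes it below -/
import Mathlib

section
/- Let {f_n} be a Riesz-Fischer sequence for a separable Hilbert space H and let L be a densely defined operator on H with f_n ∈ Dom(L) for all n and R(L*) = H. Then {L f_n} is a Riesz-Fischer sequence for H. -/
open scoped ENNReal InnerProductSpace

noncomputable section

/-- The square-sum `∑ₙ |⟨x, fₙ⟩|²` of the analysis coefficients of `x`
against the sequence `f`, valued in `ℝ≥0∞`. -/
def analysisSum {H : Type*} [NormedAddCommGroup H] [InnerProductSpace ℂ H]
    (f : ℕ → H) (x : H) : ℝ≥0∞ :=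
  ∑' n, (‖(⟪x, f n⟫_ℂ : ℂ)‖₊ : ℝ≥0∞) ^ 2

/-- `f` is a lower semi-frame for `H`. -/
def IsLowerSemiFrame {H : Type*} [NormedAddCommGroup H] [InnerProductSpace ℂ H]
    (f : ℕ → H) : Prop :=
  ∃ A : ℝ, 0 < A ∧ ∀ x : H, ENNReal.ofReal (A * ‖x‖ ^ 2) ≤ analysisSum f x

/-- `f` is a Riesz–Fischer sequence: `A ∑|cₙ|² ≤ ‖∑ cₙ fₙ‖²` for all finite scalar
sequences `c`. -/
def IsRieszFischer {H : Type*} [NormedAddCommGroup H] [InnerProductSpace ℂ H]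
    (f : ℕ → H) : Prop :=
  ∃ A : ℝ, 0 < A ∧ ∀ c : ℕ →₀ ℂ,
    A * ∑ n ∈ c.support, ‖c n‖ ^ 2 ≤ ‖∑ n ∈ c.support, c n • f n‖ ^ 2


section Aux
variable {H : Type*} [NormedAddCommGroup H] [InnerProductSpace ℂ H] [CompleteSpace H]

lemma mem_adjoint_graph_iff (L : H →ₗ.[ℂ] H) (hL : Dense (L.domain : Set H)) (p : H × H) :
    p ∈ L.adjoint.graph ↔ ∀ x : L.domain, ⟪p.2, (x : H)⟫_ℂ = ⟪p.1, L x⟫_ℂ := by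
  constructor
  · rintro hp x
    rw [LinearPMap.mem_graph_iff] at hp
    obtain ⟨y, hy1, hy2⟩ := hp
    rw [← hy2, ← hy1]
    exact LinearPMap.adjoint_isFormalAdjoint hL y x
  · intro h
    have hmem : p.1 ∈ L.adjoint.domain :=
      LinearPMap.mem_adjoint_domain_of_exists _ ⟨p.2, h⟩
    have : L.adjoint ⟨p.1, hmem⟩ = p.2 :=
      LinearPMap.adjoint_apply_eq hL _ h
    rw [LinearPMap.mem_graph_iff]
    exact ⟨⟨p.1, hmem⟩, rfl, this⟩

lemma adjoint_graph_closed (L : H →ₗ.[ℂ] H) (hL : Dense (L.domain : Set H)) :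
    IsClosed (L.adjoint.graph : Set (H × H)) := by
  have : (L.adjoint.graph : Set (H × H)) =
      ⋂ x : L.domain, {p : H × H | ⟪p.2, (x : H)⟫_ℂ = ⟪p.1, L x⟫_ℂ} := by
    ext p
    simp only [Set.mem_iInter, SetLike.mem_coe, Set.mem_setOf_eq,
      mem_adjoint_graph_iff L hL]
  rw [this]
  exact isClosed_iInter fun x => isClosed_eq
    (continuous_snd.inner continuous_const) (continuous_fst.inner continuous_const)

/-- If `L*` is surjective, `L` is bounded below on its domain. -/
lemma norm_le_of_adjoint_surjective (L : H →ₗ.[ℂ] H) (hL : Dense (L.domain : Set H))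
    (hadj : (Set.range fun y : L.adjoint.domain => L.adjoint y) = Set.univ) :
    ∃ C : ℝ, 0 < C ∧ ∀ h : L.domain, ‖(h : H)‖ ≤ C * ‖L h‖ := by
  haveI : CompleteSpace L.adjoint.graph :=
    (adjoint_graph_closed L hL).completeSpace_coe
  set π : L.adjoint.graph →L[ℂ] H :=
    (ContinuousLinearMap.snd ℂ H H).comp L.adjoint.graph.subtypeL with hπ
  have hsurj : Function.Surjective π := by
    intro h
    have : h ∈ (Set.range fun y : L.adjoint.domain => L.adjoint y) := by
      rw [hadj]; trivial
    obtain ⟨y, hy⟩ := this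
    exact ⟨⟨((y : H), L.adjoint y), LinearPMap.mem_graph _ y⟩, hy⟩
  obtain ⟨C, hC, hCle⟩ := π.exists_preimage_norm_le hsurj
  refine ⟨C, hC, fun h => ?_⟩
  obtain ⟨x, hx, hxle⟩ := hCle (h : H)
  obtain ⟨y, hy1, hy2⟩ := (LinearPMap.mem_graph_iff _).mp x.2
  have hx2 : (x : H × H).2 = (h : H) := hx
  have hyx : ‖(y : H)‖ ≤ C * ‖(h : H)‖ := by
    calc ‖(y : H)‖ = ‖(x : H × H).1‖ := by rw [← hy1]
    _ ≤ ‖(x : H × H)‖ := le_max_left _ _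
    _ ≤ C * ‖(h : H)‖ := hxle
  have key : ⟪(h : H), (h : H)⟫_ℂ = ⟪(y : H), L h⟫_ℂ := by
    rw [← LinearPMap.adjoint_isFormalAdjoint hL y h, hy2, hx2]
  have h1 : ‖(h : H)‖ ^ 2 ≤ C * ‖(h : H)‖ * ‖L h‖ := by
    have := norm_inner_le_norm (𝕜 := ℂ) (y : H) (L h)
    calc ‖(h : H)‖ ^ 2 = ‖⟪(h : H), (h : H)⟫_ℂ‖ := by
          rw [inner_self_eq_norm_sq_to_K]; simp
    _ = ‖⟪(y : H), L h⟫_ℂ‖ := by rw [key]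
    _ ≤ ‖(y : H)‖ * ‖L h‖ := this
    _ ≤ C * ‖(h : H)‖ * ‖L h‖ := by
          apply mul_le_mul_of_nonneg_right hyx (norm_nonneg _)
  rcases eq_or_lt_of_le (norm_nonneg (h : H)) with h0 | h0
  · rw [← h0]; positivity
  · nlinarith [norm_nonneg (L h)]

end Aux

/-- If `{fₙ}` is a Riesz–Fischer sequence for a separable Hilbert space
`H` and `L` is densely defined with each `fₙ ∈ Dom L` and `R(L*) = H`, then `{L fₙ}` is a
Riesz–Fischer sequence for `H`. -/
theorem rieszFischer_image
    {H : Type*} [NormedAddCommGroup H] [InnerProductSpace ℂ H] [CompleteSpace H]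
    [TopologicalSpace.SeparableSpace H]
    (f : ℕ → H) (hrf : IsRieszFischer f)
    (L : H →ₗ.[ℂ] H) (hL : Dense (L.domain : Set H)) (hf : ∀ n, f n ∈ L.domain)
    (hadj : (Set.range fun y : L.adjoint.domain => L.adjoint y) = Set.univ) :
    IsRieszFischer (fun n => L ⟨f n, hf n⟩) := by
  obtain ⟨A, hA, hAle⟩ := hrf
  obtain ⟨C, hC, hCle⟩ := norm_le_of_adjoint_surjective L hL hadj
  refine ⟨A / C ^ 2, by positivity, fun c => ?_⟩
  set h : L.domain := ∑ n ∈ c.support, c n • ⟨f n, hf n⟩ with hh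
  have hcoe : (h : H) = ∑ n ∈ c.support, c n • f n := by
    simp [hh]
  have hLh : L h = ∑ n ∈ c.support, c n • L ⟨f n, hf n⟩ := by
    rw [hh, ← LinearPMap.toFun_eq_coe, map_sum]
    exact Finset.sum_congr rfl fun n _ => by
      rw [LinearPMap.toFun_eq_coe, LinearPMap.map_smul]
  have h1 : A * ∑ n ∈ c.support, ‖c n‖ ^ 2 ≤ ‖(h : H)‖ ^ 2 := by
    rw [hcoe]; exact hAle c
  have h2 : ‖(h : H)‖ ≤ C * ‖L h‖ := hCle h
  have h3 : ‖(h : H)‖ ^ 2 ≤ C ^ 2 * ‖L h‖ ^ 2 := by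
    nlinarith [norm_nonneg (h : H), norm_nonneg (L h)]
  rw [← hLh]
  rw [div_mul_eq_mul_div, div_le_iff₀ (by positivity)]
  nlinarith
end
end

section
/- Let {f_n} be a Riesz-Fischer sequence for a separable Hilbert space H and L a densely defined operator on H with f_n ∈ Dom(L), R(L*) = H, and ‖L* f‖ ≥ γ‖f‖ for all f ∈ Dom(L*) with some γ > 1. Then {f_n + L f_n} is a Riesz-Fischer sequence for H. -/
open scoped ENNReal InnerProductSpace

noncomputable section

/-- If `{fₙ}` is a Riesz–Fischer sequence for `H`, `L` is densely defined
with each `fₙ ∈ Dom L`, `R(L*) = H`, and `‖L* y‖ ≥ γ ‖y‖` on `Dom L*` for some `γ > 1`,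
then `{fₙ + L fₙ}` is a Riesz–Fischer sequence for `H`. -/
theorem rieszFischer_add_image
    {H : Type*} [NormedAddCommGroup H] [InnerProductSpace ℂ H] [CompleteSpace H]
    [TopologicalSpace.SeparableSpace H]
    (f : ℕ → H) (hrf : IsRieszFischer f)
    (L : H →ₗ.[ℂ] H) (hL : Dense (L.domain : Set H)) (hf : ∀ n, f n ∈ L.domain)
    (hadj : (Set.range fun y : L.adjoint.domain => L.adjoint y) = Set.univ)
    (γ : ℝ) (hγ : 1 < γ)
    (hlow : ∀ y : L.adjoint.domain, γ * ‖y‖ ≤ ‖L.adjoint y‖) :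
    IsRieszFischer (fun n => f n + L ⟨f n, hf n⟩) := by
  obtain ⟨A, hA, hAbd⟩ := hrf
  -- Key estimate: (γ - 1) ‖h‖ ≤ ‖h + L h‖ for all h in the domain of L.
  have key : ∀ h : L.domain, (γ - 1) * ‖(h : H)‖ ≤ ‖(h : H) + L h‖ := by
    intro h
    obtain ⟨y, hy⟩ : ∃ y : L.adjoint.domain, L.adjoint y = (h : H) := by
      have : (h : H) ∈ Set.range fun y : L.adjoint.domain => L.adjoint y := by
        rw [hadj]; exact Set.mem_univ _
      exact this
    have hfa := L.adjoint_isFormalAdjoint hL y h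
    -- ⟪L† y, h⟫ = ⟪y, L h⟫
    have hinner : ⟪(h : H) + L h, (y : H)⟫_ℂ = ⟪(h : H), (y : H)⟫_ℂ + (‖(h : H)‖ : ℂ) ^ 2 := by
      rw [inner_add_left]
      congr 1
      have h1 : ⟪L h, (y : H)⟫_ℂ = ⟪(h : H), L.adjoint y⟫_ℂ := by
        rw [← inner_conj_symm, ← hfa, inner_conj_symm]
      rw [h1, hy, inner_self_eq_norm_sq_to_K]
      norm_cast
    have hns : (‖(h : H)‖ : ℝ) ^ 2 =
        ‖⟪(h : H) + L h, (y : H)⟫_ℂ - ⟪(h : H), (y : H)⟫_ℂ‖ := by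
      rw [hinner, add_sub_cancel_left, norm_pow, Complex.norm_real, norm_norm]
    have hcs1 : ‖⟪(h : H) + L h, (y : H)⟫_ℂ‖ ≤ ‖(h : H) + L h‖ * ‖(y : H)‖ :=
      norm_inner_le_norm _ _
    have hcs2 : ‖⟪(h : H), (y : H)⟫_ℂ‖ ≤ ‖(h : H)‖ * ‖(y : H)‖ :=
      norm_inner_le_norm _ _
    have htri : (‖(h : H)‖ : ℝ) ^ 2 ≤ ‖(h : H) + L h‖ * ‖(y : H)‖ + ‖(h : H)‖ * ‖(y : H)‖ := by
      rw [hns]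
      exact (norm_sub_le _ _).trans (add_le_add hcs1 hcs2)
    have hylow : γ * ‖(y : H)‖ ≤ ‖(h : H)‖ := by
      have := hlow y
      rwa [hy] at this
    rcases eq_or_lt_of_le (norm_nonneg (h : H)) with h0 | h0
    · rw [← h0, mul_zero]; exact norm_nonneg _
    · have hy0 : (0:ℝ) ≤ ‖(y : H)‖ := norm_nonneg _
      have hLh0 : (0:ℝ) ≤ ‖(h : H) + L h‖ := norm_nonneg _
      nlinarith [mul_le_mul_of_nonneg_left hylow hLh0, mul_le_mul_of_nonneg_left hylow h0.le]
  refine ⟨(γ - 1) ^ 2 * A, mul_pos (by nlinarith : (0:ℝ) < (γ - 1) ^ 2) hA, fun c => ?_⟩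
  set hvec : L.domain := ∑ n ∈ c.support, c n • (⟨f n, hf n⟩ : L.domain) with hhvec
  have hcoe : (hvec : H) = ∑ n ∈ c.support, c n • f n := by
    rw [hhvec]
    push_cast
    rfl
  have hLsum : L hvec = ∑ n ∈ c.support, c n • L ⟨f n, hf n⟩ := by
    rw [hhvec]
    exact map_sum L.toFun (fun n => c n • (⟨f n, hf n⟩ : L.domain)) c.support |>.trans
      (Finset.sum_congr rfl fun n _ => L.toFun.map_smul (c n) _)
  have hsplit : ∑ n ∈ c.support, c n • (f n + L ⟨f n, hf n⟩) = (hvec : H) + L hvec := by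
    rw [hcoe, hLsum, ← Finset.sum_add_distrib]
    exact Finset.sum_congr rfl fun n _ => smul_add _ _ _
  have hk := key hvec
  have hfb := hAbd c
  rw [← hcoe] at hfb
  have hsq : ((γ - 1) * ‖(hvec : H)‖) ^ 2 ≤ ‖(hvec : H) + L hvec‖ ^ 2 := by
    apply sq_le_sq' _ hk
    nlinarith [norm_nonneg (hvec : H), norm_nonneg ((hvec : H) + L hvec)]
  calc (γ - 1) ^ 2 * A * ∑ n ∈ c.support, ‖c n‖ ^ 2
      = (γ - 1) ^ 2 * (A * ∑ n ∈ c.support, ‖c n‖ ^ 2) := by ring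
    _ ≤ (γ - 1) ^ 2 * ‖(hvec : H)‖ ^ 2 := by
        apply mul_le_mul_of_nonneg_left hfb (by positivity)
    _ = ((γ - 1) * ‖(hvec : H)‖) ^ 2 := by ring
    _ ≤ ‖(hvec : H) + L hvec‖ ^ 2 := hsq
    _ = ‖∑ n ∈ c.support, c n • (fun n => f n + L ⟨f n, hf n⟩) n‖ ^ 2 := by rw [hsplit]
end
end

section
/- Let {f_n} be a lower semi-frame for a separable Hilbert space H with lower bound α, and let {g_n} be a Bessel sequence in H with Bessel bound β. If {f_n + g_n} is complete in H and √α > √β, then {f_n + g_n} is a lower semi-frame for H; in fact (√α − √β)² ‖f‖² ≤ Σ_n |⟨f, f_n + g_n⟩|² for all f ∈ H. -/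
open scoped ENNReal InnerProductSpace

noncomputable section

/-!
The analysis coefficients `n ↦ ⟪x, fₙ⟫` of `x` have ℓ² norm `‖C_f x‖ = (∑ₙ |⟨x, fₙ⟩|²)^{1/2}`,
the `L²` seminorm for counting measure on `ℕ`; taking it in `ℝ≥0∞` avoids all summability
side conditions. By the reverse triangle inequality
`‖C_{f+g} x‖ ≥ ‖C_f x‖ - ‖C_g x‖ ≥ √α ‖x‖ - √β ‖x‖`, and squaring gives the bound.
-/

open MeasureTheory

theorem ENNReal.ofReal_mul_sq_eq_ofReal_sqrt_mul_sq {c t : ℝ} (ht : 0 ≤ t) :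
    ENNReal.ofReal (c * t ^ 2) = ENNReal.ofReal (Real.sqrt c * t) ^ 2 := by
  rcases le_total c 0 with hc | hc
  · simp [Real.sqrt_eq_zero'.mpr hc,
      ENNReal.ofReal_of_nonpos (mul_nonpos_of_nonpos_of_nonneg hc (sq_nonneg t))]
  · rw [← ENNReal.ofReal_pow (by positivity), mul_pow, Real.sq_sqrt hc]

section AnalysisNorm

variable {H : Type*} [NormedAddCommGroup H] [InnerProductSpace ℂ H]

def analysisNorm (f : ℕ → H) (x : H) : ℝ≥0∞ :=
  eLpNorm (fun n => ⟪x, f n⟫_ℂ) 2 Measure.count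

theorem analysisSum_eq_analysisNorm_sq (f : ℕ → H) (x : H) :
    analysisSum f x = analysisNorm f x ^ 2 := by
  have h := eLpNorm_nnreal_pow_eq_lintegral (f := fun n => ⟪x, f n⟫_ℂ)
    (μ := Measure.count) (p := 2) two_ne_zero
  rw [lintegral_count, NNReal.coe_ofNat, ENNReal.rpow_two] at h
  rw [analysisNorm, analysisSum]
  simpa [enorm_eq_nnnorm] using h.symm

theorem analysisNorm_sub_le_analysisNorm_add (f g : ℕ → H) (x : H) :
    analysisNorm f x - analysisNorm g x ≤ analysisNorm (fun n => f n + g n) x := by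
  have hsub : (fun n => ⟪x, f n⟫_ℂ) = (fun n => ⟪x, f n + g n⟫_ℂ) - fun n => ⟪x, g n⟫_ℂ := by
    ext n
    simp
  rw [tsub_le_iff_right, analysisNorm, hsub]
  exact eLpNorm_sub_le .of_discrete .of_discrete one_le_two

end AnalysisNorm

theorem lowerSemiFrame_add_bessel_general
    {H : Type*} [NormedAddCommGroup H] [InnerProductSpace ℂ H]
    (f g : ℕ → H) (α β : ℝ)
    (hlsf : ∀ x : H, ENNReal.ofReal (α * ‖x‖ ^ 2) ≤ analysisSum f x)
    (hbes : ∀ x : H, analysisSum g x ≤ ENNReal.ofReal (β * ‖x‖ ^ 2))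
    (hab : Real.sqrt β < Real.sqrt α) :
    (∀ x : H, ENNReal.ofReal ((Real.sqrt α - Real.sqrt β) ^ 2 * ‖x‖ ^ 2) ≤
        analysisSum (fun n => f n + g n) x) ∧
      IsLowerSemiFrame (fun n => f n + g n) := by
  have key (x : H) : ENNReal.ofReal ((Real.sqrt α - Real.sqrt β) ^ 2 * ‖x‖ ^ 2) ≤
      analysisSum (fun n => f n + g n) x := by
    have hf : ENNReal.ofReal (Real.sqrt α * ‖x‖) ≤ analysisNorm f x := by
      simpa [ENNReal.ofReal_mul_sq_eq_ofReal_sqrt_mul_sq (norm_nonneg x),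
        analysisSum_eq_analysisNorm_sq, ENNReal.pow_le_pow_left_iff two_ne_zero] using hlsf x
    have hg : analysisNorm g x ≤ ENNReal.ofReal (Real.sqrt β * ‖x‖) := by
      simpa [ENNReal.ofReal_mul_sq_eq_ofReal_sqrt_mul_sq (norm_nonneg x),
        analysisSum_eq_analysisNorm_sq, ENNReal.pow_le_pow_left_iff two_ne_zero] using hbes x
    have hfg : ENNReal.ofReal ((Real.sqrt α - Real.sqrt β) * ‖x‖) ≤
        analysisNorm (fun n => f n + g n) x := by
      rw [sub_mul, ENNReal.ofReal_sub _ (by positivity)]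
      exact (tsub_le_tsub hf hg).trans (analysisNorm_sub_le_analysisNorm_add f g x)
    rw [analysisSum_eq_analysisNorm_sq, ENNReal.ofReal_mul_sq_eq_ofReal_sqrt_mul_sq (norm_nonneg x),
      Real.sqrt_sq (sub_nonneg.mpr hab.le)]
    gcongr
  exact ⟨key, _, pow_pos (sub_pos.mpr hab) 2, key⟩

/-- If `{fₙ}` is a lower semi-frame for `H` with bound `α`, `{gₙ}` is a
Bessel sequence with bound `β`, `{fₙ + gₙ}` is complete in `H` and `√α > √β`, then
`(√α − √β)² ‖x‖² ≤ ∑ₙ |⟨x, fₙ + gₙ⟩|²` for all `x`, so `{fₙ + gₙ}` is a lower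
semi-frame for `H`. -/
theorem lowerSemiFrame_add_bessel
    {H : Type*} [NormedAddCommGroup H] [InnerProductSpace ℂ H] [CompleteSpace H]
    [TopologicalSpace.SeparableSpace H]
    (f g : ℕ → H) (α β : ℝ) (hα : 0 < α) (hβ : 0 < β)
    (hlsf : ∀ x : H, ENNReal.ofReal (α * ‖x‖ ^ 2) ≤ analysisSum f x)
    (hbes : ∀ x : H, analysisSum g x ≤ ENNReal.ofReal (β * ‖x‖ ^ 2))
    (hcomp : Dense (Submodule.span ℂ (Set.range fun n => f n + g n) : Set H))
    (hab : Real.sqrt β < Real.sqrt α) :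
    (∀ x : H, ENNReal.ofReal ((Real.sqrt α - Real.sqrt β) ^ 2 * ‖x‖ ^ 2) ≤
        analysisSum (fun n => f n + g n) x) ∧
      IsLowerSemiFrame (fun n => f n + g n) :=
  lowerSemiFrame_add_bessel_general f g α β hlsf hbes hab
end
end

section
/- Let {f_n} = {n e_n} in ℓ² and let L be the densely defined self-adjoint operator determined by L e_n = e_n / n. Then R(L) is not closed, yet {L f_n} = {e_n} is a frame (an orthonormal basis) for ℓ². Hence closedness of R(L*) is not necessary for {L f_n} to be a lower semi-frame. -/
/-! The range of the diagonal operator `L` contains every `eₙ`, so it is dense; were it closed, `L`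
would be onto, but `L y = (1/(n+1))ₙ` forces `y = (1, 1, …) ∉ ℓ²`. The vectors `L fₙ = eₙ` form a
Hilbert basis, so Parseval gives the frame bounds `A = B = 1`. -/

open scoped ENNReal InnerProductSpace

noncomputable section

/-- `f` is a frame for `H`. -/
def IsFrame {H : Type*} [NormedAddCommGroup H] [InnerProductSpace ℂ H]
    (f : ℕ → H) : Prop :=
  ∃ A B : ℝ, 0 < A ∧ A ≤ B ∧ ∀ x : H,
    ENNReal.ofReal (A * ‖x‖ ^ 2) ≤ analysisSum f x ∧
      analysisSum f x ≤ ENNReal.ofReal (B * ‖x‖ ^ 2)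

section Diagonal

variable {ι 𝕜 : Type*} [DecidableEq ι] [NontriviallyNormedField 𝕜] {p : ℝ≥0∞} [Fact (1 ≤ p)]

def IsLpDiagonal (L : lp (fun _ : ι => 𝕜) p →L[𝕜] lp (fun _ : ι => 𝕜) p) (d : ι → 𝕜) : Prop :=
  ∀ i, L (lp.single p i 1) = d i • lp.single p i 1

variable {L : lp (fun _ : ι => 𝕜) p →L[𝕜] lp (fun _ : ι => 𝕜) p} {d : ι → 𝕜}

theorem IsLpDiagonal.map_single (hL : IsLpDiagonal L d) (i : ι) (c : 𝕜) :
    L (lp.single p i c) = lp.single p i (d i * c) := by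
  have hc : lp.single p i c = c • lp.single (E := fun _ : ι => 𝕜) p i 1 := by
    rw [← lp.single_smul, smul_eq_mul, mul_one]
  rw [hc, map_smul, hL, smul_smul, mul_comm, ← lp.single_smul, smul_eq_mul, mul_one]

theorem IsLpDiagonal.apply (hp : p ≠ ∞) (hL : IsLpDiagonal L d)
    (y : lp (fun _ : ι => 𝕜) p) (i : ι) : L y i = d i * y i := by
  have hsum := (lp.evalCLM 𝕜 (fun _ : ι => 𝕜) p i).hasSum (L.hasSum (lp.hasSum_single hp y))
  simp only [hL.map_single] at hsum
  refine (hsum.unique (hasSum_single i fun j hj => ?_)).trans ?_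
  · exact Pi.single_eq_of_ne' hj _
  · exact Pi.single_eq_same _ _

theorem IsLpDiagonal.denseRange (hp : p ≠ ∞) (hL : IsLpDiagonal L d) (hd : ∀ i, d i ≠ 0) :
    DenseRange L := by
  intro x
  refine mem_closure_of_tendsto (lp.hasSum_single hp x) (Filter.Eventually.of_forall fun s => ?_)
  refine ⟨∑ i ∈ s, lp.single p i ((d i)⁻¹ * x i), ?_⟩
  simp only [map_sum, hL.map_single, mul_inv_cancel_left₀ (hd _)]

theorem IsLpDiagonal.not_isClosed_range [Infinite ι] (hp : p ≠ ∞) (hL : IsLpDiagonal L d)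
    (hd : ∀ i, d i ≠ 0) (hdp : Memℓp d p) : ¬ IsClosed (Set.range L) := by
  intro hclosed
  obtain ⟨y, hy⟩ : (⟨d, hdp⟩ : lp (fun _ : ι => 𝕜) p) ∈ Set.range L := by
    rw [← hclosed.closure_eq]
    exact hL.denseRange hp hd _
  have hy_one : (y : ι → 𝕜) = fun _ => 1 := funext fun i =>
    mul_left_cancel₀ (hd i) (by rw [mul_one, ← hL.apply hp, hy])
  have hp_pos : 0 < p.toReal := ENNReal.toReal_pos (zero_lt_one.trans_le Fact.out).ne' hp
  have := (hy_one ▸ y.prop).summable hp_pos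
  simp [summable_const_iff] at this

end Diagonal

theorem memℓp_two_inv_nat_succ : Memℓp (fun n : ℕ => (((n + 1 : ℕ) : ℂ))⁻¹) 2 := by
  apply memℓp_gen
  refine ((Real.summable_one_div_nat_add_rpow 1 2).2 one_lt_two).congr fun n => ?_
  simp only [one_div, norm_inv, ENNReal.toReal_ofNat]
  norm_cast
  simp [inv_pow]

section Frame

variable {H : Type*} [NormedAddCommGroup H] [InnerProductSpace ℂ H]

theorem HilbertBasis.analysisSum_eq (b : HilbertBasis ℕ ℂ H) (x : H) :
    analysisSum b x = ENNReal.ofReal (‖x‖ ^ 2) := by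
  have h := lp.hasSum_norm (p := 2) (by norm_num) (b.repr x)
  simp only [ENNReal.toReal_ofNat, Real.rpow_two, b.repr_apply_apply,
    LinearIsometryEquiv.norm_map] at h
  rw [analysisSum, ← h.tsum_eq, ENNReal.ofReal_tsum_of_nonneg (fun _ => by positivity) h.summable]
  refine tsum_congr fun n => ?_
  rw [← norm_inner_symm, ENNReal.ofReal_pow (norm_nonneg _), ofReal_norm, enorm_eq_nnnorm]

theorem HilbertBasis.isFrame (b : HilbertBasis ℕ ℂ H) : IsFrame b :=
  ⟨1, 1, one_pos, le_rfl, fun x => by simp [b.analysisSum_eq]⟩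

theorem IsFrame.isLowerSemiFrame {f : ℕ → H} (hf : IsFrame f) : IsLowerSemiFrame f :=
  let ⟨A, _, hA, _, hAB⟩ := hf
  ⟨A, hA, fun x => (hAB x).1⟩

end Frame

theorem diagonal_image_frame_range_not_closed_general
    (L : lp (fun _ : ℕ => ℂ) 2 →L[ℂ] lp (fun _ : ℕ => ℂ) 2)
    (hdiag : ∀ n : ℕ, L (lp.single 2 n (1 : ℂ)) = (((n + 1 : ℕ) : ℂ))⁻¹ • lp.single 2 n (1 : ℂ)) :
    ¬ IsClosed (Set.range L) ∧
      (∀ n : ℕ, L (((n + 1 : ℕ) : ℂ) • lp.single 2 n (1 : ℂ)) = lp.single 2 n (1 : ℂ)) ∧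
      IsFrame (fun n => L (((n + 1 : ℕ) : ℂ) • lp.single 2 n (1 : ℂ))) ∧
      IsLowerSemiFrame (fun n => L (((n + 1 : ℕ) : ℂ) • lp.single 2 n (1 : ℂ))) := by
  have hne : ∀ n : ℕ, ((n + 1 : ℕ) : ℂ) ≠ 0 := fun n => Nat.cast_ne_zero.2 n.succ_ne_zero
  have hLf : ∀ n : ℕ, L (((n + 1 : ℕ) : ℂ) • lp.single 2 n (1 : ℂ)) = lp.single 2 n (1 : ℂ) :=
    fun n => by rw [map_smul, hdiag, smul_smul, mul_inv_cancel₀ (hne n), one_smul]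
  have hframe : IsFrame (fun n => L (((n + 1 : ℕ) : ℂ) • lp.single 2 n (1 : ℂ))) := by
    let b := HilbertBasis.ofRepr (LinearIsometryEquiv.refl ℂ (lp (fun _ : ℕ => ℂ) 2))
    have hb : ∀ n, b n = lp.single 2 n 1 := fun n => by rw [← b.repr_symm_single]; rfl
    rw [funext hLf, ← funext hb]
    exact b.isFrame
  exact ⟨IsLpDiagonal.not_isClosed_range (by norm_num) hdiag (fun n => inv_ne_zero (hne n))
    memℓp_two_inv_nat_succ, hLf, hframe, hframe.isLowerSemiFrame⟩

/-- Let `fₙ = (n+1) eₙ` in `ℓ²` and let `L` be the (bounded,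
self-adjoint) diagonal operator with `L eₙ = eₙ / (n+1)`.  Then `R(L)` is not closed,
yet `L fₙ = eₙ` and `{L fₙ}` is a frame for `ℓ²`; hence closedness of `R(L*)` is not
necessary for `{L fₙ}` to be a lower semi-frame. -/
theorem diagonal_image_frame_range_not_closed
    (L : lp (fun _ : ℕ => ℂ) 2 →L[ℂ] lp (fun _ : ℕ => ℂ) 2)
    (hsa : IsSelfAdjoint L)
    (hdiag : ∀ n : ℕ, L (lp.single 2 n (1 : ℂ)) = (((n + 1 : ℕ) : ℂ))⁻¹ • lp.single 2 n (1 : ℂ)) :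
    ¬ IsClosed (Set.range L) ∧
      (∀ n : ℕ, L (((n + 1 : ℕ) : ℂ) • lp.single 2 n (1 : ℂ)) = lp.single 2 n (1 : ℂ)) ∧
      IsFrame (fun n => L (((n + 1 : ℕ) : ℂ) • lp.single 2 n (1 : ℂ))) ∧
      IsLowerSemiFrame (fun n => L (((n + 1 : ℕ) : ℂ) • lp.single 2 n (1 : ℂ))) :=
  diagonal_image_frame_range_not_closed_general L hdiag
end
end
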